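/- Let K be a nontrivial finite group and let β_K : ⊕_{n∈ℕ} K → ⊕_{n∈ℕ} K be the right Bernoulli shift, β_K(x_0, x_1, …) = (1, x_0, x_1, …), on the direct sum of countably many copies of K. Then h_alg(β_K) = log |K|. -/

import Mathlib

open scoped Pointwise ENNReal

/-- The `n`-th trajectory of a finite subset `F` under `φ`
(`Tn φ F n = T_{n+1}(φ,F) = F·φ(F)·…·φⁿ(F)`, a pointwise product of finsets). -/
noncomputable def Tn {G : Type*} [Group G] (φ : G → G) (F : Finset G) : ℕ → Finset G
  | 0 => F
  | n + 1 =>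
      letI := Classical.decEq G
      Tn φ F n * F.image φ^[n + 1]

/-- `H_alg(φ,F) = lim_n (log |T_n(φ,F)|)/n` (the limit exists, and equals the `limsup`). -/
noncomputable def Halg {G : Type*} [Group G] (φ : G → G) (F : Finset G) : ℝ :=
  Filter.limsup (fun n : ℕ => Real.log (Tn φ F n).card / ((n : ℝ) + 1)) Filter.atTop

/-- The algebraic entropy `h_alg(φ) = sup {H_alg(φ,F) : F nonempty finite} ∈ [0,∞]`. -/
noncomputable def halg {G : Type*} [Group G] (φ : G → G) : ℝ≥0∞ :=
  ⨆ F : Finset G, ⨆ _ : F.Nonempty, ENNReal.ofReal (Halg φ F)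

/-- The direct sum `⊕_{n ∈ ℕ} K`: the subgroup of `ℕ → K` consisting of the sequences
that are eventually equal to the identity (equal to `1` outside a finite set). -/
def BGrp (K : Type*) [Group K] : Subgroup (ℕ → K) where
  carrier := {f | (Function.mulSupport f).Finite}
  one_mem' := by simp [Function.mulSupport_one]
  mul_mem' := fun hf hg => ((Set.Finite.union hf hg).subset (Function.mulSupport_mul _ _))
  inv_mem' := fun {f} hf => by simpa [Function.mulSupport_inv] using hf

/-- The underlying function of the right Bernoulli shift. -/
def rshiftFun {K : Type*} [Group K] (f : ℕ → K) : ℕ → K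
  | 0 => 1
  | n + 1 => f n

theorem rshiftFun_mem {K : Type*} [Group K] (f : BGrp K) : rshiftFun f.val ∈ BGrp K := by
  refine Set.Finite.subset (f.2.image Nat.succ) ?_
  intro n hn
  cases n with
  | zero => exact absurd rfl hn
  | succ k => exact ⟨k, hn, rfl⟩

/-- The right Bernoulli shift `β_K : ⊕_ℕ K → ⊕_ℕ K`, `(x₀, x₁, …) ↦ (1, x₀, x₁, …)`. -/
def rshift {K : Type*} [Group K] (f : BGrp K) : BGrp K :=
  ⟨rshiftFun f.val, rshiftFun_mem f⟩

section Aux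

variable {K : Type*} [Group K]

lemma BGrp.finiteSupport (f : BGrp K) : (Function.mulSupport f.val).Finite := f.2

lemma rshift_iter_val (f : BGrp K) (k n : ℕ) :
    (rshift^[k] f).val n = if n < k then 1 else f.val (n - k) := by
  induction k generalizing n with
  | zero => simp
  | succ k ih =>
    rw [Function.iterate_succ_apply']
    cases n with
    | zero => simp [rshift, rshiftFun]
    | succ m =>
      show rshiftFun (rshift^[k] f).val (m + 1) = _
      rw [rshiftFun, ih m]
      simp [Nat.succ_lt_succ_iff, Nat.succ_sub_succ]

lemma rshift_iter_support (f : BGrp K) (k m : ℕ)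
    (h : Function.mulSupport f.val ⊆ Set.Iio m) :
    Function.mulSupport (rshift^[k] f).val ⊆ Set.Iio (m + k) := by
  intro n hn
  rw [Function.mem_mulSupport, rshift_iter_val] at hn
  by_cases hk : n < k
  · exact lt_of_lt_of_le hk (by omega)
  · rw [if_neg hk] at hn
    have := h hn
    simp only [Set.mem_Iio] at this ⊢
    omega

lemma Tn_support (F : Finset (BGrp K)) (m : ℕ)
    (hF : ∀ f ∈ F, Function.mulSupport f.val ⊆ Set.Iio m) (n : ℕ) :
    ∀ g ∈ Tn rshift F n, Function.mulSupport g.val ⊆ Set.Iio (m + n) := by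
  letI := Classical.decEq (BGrp K)
  induction n with
  | zero => simpa [Tn] using hF
  | succ n ih =>
    intro g hg
    rw [Tn] at hg
    obtain ⟨a, ha, b, hb, rfl⟩ := Finset.mem_mul.mp hg
    obtain ⟨f, hf, rfl⟩ := Finset.mem_image.mp hb
    have hsa : Function.mulSupport a.val ⊆ Set.Iio (m + (n + 1)) :=
      (ih a ha).trans (Set.Iio_subset_Iio (by omega))
    have hsb : Function.mulSupport (rshift^[n+1] f).val ⊆ Set.Iio (m + (n + 1)) := by
      have := rshift_iter_support f (n + 1) m (hF f hf)
      exact this.trans (Set.Iio_subset_Iio (by omega))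
    have hcoe : (a * rshift^[n+1] f).val = a.val * (rshift^[n+1] f).val := rfl
    rw [hcoe]
    exact (Function.mulSupport_mul _ _).trans (Set.union_subset hsa hsb)

lemma Tn_nonempty {G : Type*} [Group G] (φ : G → G) (F : Finset G) (hF : F.Nonempty) (n : ℕ) :
    (Tn φ F n).Nonempty := by
  letI := Classical.decEq G
  induction n with
  | zero => exact hF
  | succ n ih => rw [Tn]; exact ih.mul (hF.image _)

lemma card_le_of_support [Fintype K] (S : Finset (BGrp K)) (N : ℕ)
    (h : ∀ g ∈ S, Function.mulSupport g.val ⊆ Set.Iio N) :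
    S.card ≤ Fintype.card K ^ N := by
  classical
  have key : S.card ≤ (Finset.univ : Finset (Fin N → K)).card := by
    apply Finset.card_le_card_of_injOn (fun (g : BGrp K) (i : Fin N) => g.val i)
      (fun _ _ => Finset.mem_univ _)
    intro g₁ hg₁ g₂ hg₂ heq
    apply Subtype.ext
    funext n
    by_cases hn : n < N
    · exact congrFun heq ⟨n, hn⟩
    · have h₁ : g₁.val n = 1 := by
        by_contra hc
        exact hn (h g₁ hg₁ hc)
      have h₂ : g₂.val n = 1 := by
        by_contra hc
        exact hn (h g₂ hg₂ hc)
      rw [h₁, h₂]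
  simpa [Fintype.card_fun] using key

lemma Halg_le [Fintype K] (F : Finset (BGrp K)) (hF : F.Nonempty) :
    Halg rshift F ≤ Real.log (Fintype.card K) := by
  classical
  -- choose a uniform support bound m
  set m : ℕ := F.sup (fun f => (BGrp.finiteSupport f).toFinset.sup id + 1) with hm
  have hsupp : ∀ f ∈ F, Function.mulSupport f.val ⊆ Set.Iio m := by
    intro f hf n hn
    have hn' : n ∈ (BGrp.finiteSupport f).toFinset := (BGrp.finiteSupport f).mem_toFinset.mpr hn
    have h1 : n ≤ (BGrp.finiteSupport f).toFinset.sup id := Finset.le_sup (f := id) hn'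
    have h2 : (BGrp.finiteSupport f).toFinset.sup id + 1 ≤ m :=
      Finset.le_sup (f := fun f => (BGrp.finiteSupport f).toFinset.sup id + 1) hf
    simp only [Set.mem_Iio]
    omega
  set L := Real.log (Fintype.card K) with hL
  have hL0 : 0 ≤ L := Real.log_nonneg (by exact_mod_cast Fintype.card_pos (α := K))
  have hcard : ∀ n : ℕ, (Tn rshift F n).card ≤ Fintype.card K ^ (m + n) := fun n =>
    card_le_of_support _ _ (Tn_support F m hsupp n)
  have hpos : ∀ n : ℕ, 0 < (Tn rshift F n).card := fun n =>
    Finset.card_pos.mpr (Tn_nonempty _ _ hF n)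
  have hle : ∀ n : ℕ, Real.log (Tn rshift F n).card / ((n : ℝ) + 1)
      ≤ ((m : ℝ) + n) / ((n : ℝ) + 1) * L := by
    intro n
    have h1 : Real.log (Tn rshift F n).card ≤ ((m : ℝ) + n) * L := by
      have hx : ((Tn rshift F n).card : ℝ) ≤ ((Fintype.card K : ℝ)) ^ (m + n) := by
        exact_mod_cast hcard n
      have h2 := Real.log_le_log (x := ((Tn rshift F n).card : ℝ))
        (by exact_mod_cast hpos n) hx
      rw [Real.log_pow] at h2
      push_cast at h2
      exact h2
    rw [div_mul_eq_mul_div]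
    gcongr
  -- the bounding sequence tends to L
  have htend : Filter.Tendsto (fun n : ℕ => ((m : ℝ) + n) / ((n : ℝ) + 1) * L)
      Filter.atTop (nhds L) := by
    have h1 : Filter.Tendsto (fun n : ℕ => ((m : ℝ) + n) / ((n : ℝ) + 1))
        Filter.atTop (nhds 1) := by
      have heq : ∀ n : ℕ, ((m : ℝ) + n) / ((n : ℝ) + 1)
          = 1 + ((m : ℝ) - 1) * (1 / ((n : ℝ) + 1)) := by
        intro n
        have hne : ((n : ℝ) + 1) ≠ 0 := by positivity
        field_simp
        ring
      simp only [heq]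
      have := (tendsto_one_div_add_atTop_nhds_zero_nat.const_mul ((m : ℝ) - 1)).const_add 1
      simpa using this
    have := h1.mul_const L
    simpa using this
  have hbdd : Filter.IsBoundedUnder (· ≤ ·) Filter.atTop
      (fun n : ℕ => ((m : ℝ) + n) / ((n : ℝ) + 1) * L) := htend.isBoundedUnder_le
  have hnn : ∀ n : ℕ, (0 : ℝ) ≤ Real.log (Tn rshift F n).card / ((n : ℝ) + 1) := by
    intro n
    apply div_nonneg _ (by positivity)
    apply Real.log_nonneg
    exact_mod_cast hpos n
  have hcobdd : Filter.IsCoboundedUnder (· ≤ ·) Filter.atTop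
      (fun n : ℕ => Real.log (Tn rshift F n).card / ((n : ℝ) + 1)) := by
    apply Filter.IsBoundedUnder.isCoboundedUnder_le
    exact ⟨0, Filter.eventually_map.mpr (Filter.Eventually.of_forall fun n => hnn n)⟩
  calc Halg rshift F ≤ Filter.limsup (fun n : ℕ => ((m : ℝ) + n) / ((n : ℝ) + 1) * L)
        Filter.atTop :=
      Filter.limsup_le_limsup (Filter.Eventually.of_forall hle) hcobdd hbdd
    _ = L := htend.limsup_eq

/-- The element of `⊕ℕ K` supported at `0` with value `k`. -/
def e₀ (k : K) : BGrp K :=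
  ⟨fun n => if n = 0 then k else 1, by
    apply Set.Finite.subset (Set.finite_singleton 0)
    intro n hn
    rw [Function.mem_mulSupport] at hn
    by_contra h
    exact hn (if_neg h)⟩

/-- The "cube" embedding: a tuple `v : Fin N → K` as an element of `⊕ℕ K` supported
in `[0, N)`. -/
def emb (N : ℕ) (v : Fin N → K) : BGrp K :=
  ⟨fun n => if h : n < N then v ⟨n, h⟩ else 1, by
    apply Set.Finite.subset (Set.finite_Iio N)
    intro n hn
    rw [Function.mem_mulSupport] at hn
    by_contra h
    exact hn (dif_neg h)⟩

lemma emb_injective (N : ℕ) : Function.Injective (emb (K := K) N) := by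
  intro v w h
  funext i
  have := congrFun (congrArg Subtype.val h) i
  simpa [emb, i.isLt] using this

/-- The cube finset: all elements supported in `[0, N)`. -/
noncomputable def cube [Fintype K] (N : ℕ) : Finset (BGrp K) :=
  letI := Classical.decEq (BGrp K)
  Finset.univ.image (emb (K := K) N)

lemma card_cube [Fintype K] (N : ℕ) : (cube (K := K) N).card = Fintype.card K ^ N := by
  letI := Classical.decEq (BGrp K)
  rw [cube, Finset.card_image_of_injective _ (emb_injective N)]
  simp [Fintype.card_fun]

lemma mem_cube [Fintype K] (N : ℕ) (g : BGrp K) :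
    g ∈ cube N ↔ Function.mulSupport g.val ⊆ Set.Iio N := by
  letI := Classical.decEq (BGrp K)
  constructor
  · intro hg
    obtain ⟨v, _, rfl⟩ := Finset.mem_image.mp hg
    intro n hn
    rw [Function.mem_mulSupport] at hn
    by_contra h
    exact hn (dif_neg h)
  · intro h
    rw [cube]
    refine Finset.mem_image.mpr ⟨fun i => g.val i, Finset.mem_univ _, ?_⟩
    apply Subtype.ext
    funext n
    show (if hn : n < N then g.val n else 1) = g.val n
    by_cases hn : n < N
    · rw [dif_pos hn]
    · rw [dif_neg hn]
      by_contra hc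
      exact hn (h fun hh => hc hh.symm)

/-- The special finset: elements supported at `{0}`. -/
noncomputable def F₀ (K : Type*) [Group K] [Fintype K] : Finset (BGrp K) :=
  letI := Classical.decEq (BGrp K)
  Finset.univ.image (e₀ (K := K))

lemma F₀_supp [Fintype K] : ∀ f ∈ F₀ K, Function.mulSupport f.val ⊆ Set.Iio 1 := by
  letI := Classical.decEq (BGrp K)
  intro f hf
  obtain ⟨k, _, rfl⟩ := Finset.mem_image.mp hf
  intro n hn
  rw [Function.mem_mulSupport] at hn
  simp only [Set.mem_Iio]
  by_contra h
  exact hn (if_neg (by omega))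

lemma F₀_nonempty [Fintype K] : (F₀ K).Nonempty := by
  letI := Classical.decEq (BGrp K)
  exact ⟨e₀ 1, Finset.mem_image.mpr ⟨1, Finset.mem_univ _, rfl⟩⟩

lemma Tn_F₀ [Fintype K] (n : ℕ) : Tn rshift (F₀ K) n = cube (n + 1) := by
  letI := Classical.decEq (BGrp K)
  induction n with
  | zero =>
    apply Finset.Subset.antisymm
    · intro g hg
      rw [mem_cube]
      exact (Tn_support (F₀ K) 1 F₀_supp 0) g hg
    · intro g hg
      rw [mem_cube] at hg
      show g ∈ F₀ K
      refine Finset.mem_image.mpr ⟨g.val 0, Finset.mem_univ _, ?_⟩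
      apply Subtype.ext
      funext n
      show (if n = 0 then g.val 0 else 1) = g.val n
      cases n with
      | zero => rfl
      | succ m =>
        rw [if_neg (Nat.succ_ne_zero m)]
        by_contra hc
        have : m + 1 ∈ Set.Iio 1 := hg fun hh => hc hh.symm
        simp at this
  | succ n ih =>
    apply Finset.Subset.antisymm
    · intro g hg
      rw [mem_cube]
      have := Tn_support (F₀ K) 1 F₀_supp (n + 1) g hg
      exact this.trans (Set.Iio_subset_Iio (by omega))
    · intro g hg
      rw [mem_cube] at hg
      rw [Tn, ih]
      -- decompose g = g' * rshift^[n+1] (e₀ (g (n+1)))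
      set c : K := g.val (n + 1) with hc
      set g' : BGrp K := emb (n + 1) (fun i => g.val i) with hg'
      have hmem1 : g' ∈ cube (n + 1) := by
        rw [cube]
        exact Finset.mem_image.mpr ⟨_, Finset.mem_univ _, rfl⟩
      have hmem2 : rshift^[n+1] (e₀ c) ∈ (F₀ K).image rshift^[n+1] :=
        Finset.mem_image.mpr ⟨e₀ c, Finset.mem_image.mpr ⟨c, Finset.mem_univ _, rfl⟩, rfl⟩
      refine Finset.mem_mul.mpr ⟨g', hmem1, rshift^[n+1] (e₀ c), hmem2, ?_⟩
      apply Subtype.ext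
      funext j
      show g'.val j * (rshift^[n+1] (e₀ c)).val j = g.val j
      rw [rshift_iter_val]
      rcases lt_trichotomy j (n + 1) with hj | hj | hj
      · rw [if_pos hj, mul_one]
        show (if h : j < n + 1 then g.val j else 1) = g.val j
        rw [dif_pos hj]
      · have h1 : g'.val j = 1 := dif_neg (by omega)
        have h2 : (e₀ c).val (j - (n + 1)) = c := by
          have h3 : j - (n + 1) = 0 := by omega
          rw [h3]; rfl
        rw [h1, one_mul, if_neg (by omega), h2, hc, hj]
      · have h1 : g'.val j = 1 := dif_neg (by omega)
        have h2 : (e₀ c).val (j - (n + 1)) = 1 := if_neg (by omega)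
        rw [h1, one_mul, if_neg (by omega), h2]
        by_contra hcon
        have : j ∈ Set.Iio (n + 2) := hg fun hh => hcon hh.symm
        simp only [Set.mem_Iio] at this
        omega

lemma Halg_F₀ [Fintype K] : Halg rshift (F₀ K) = Real.log (Fintype.card K) := by
  have hcard : ∀ n : ℕ, ((Tn rshift (F₀ K) n).card : ℝ) = (Fintype.card K : ℝ) ^ (n + 1) := by
    intro n
    rw [Tn_F₀, card_cube]
    push_cast
    ring
  have : (fun n : ℕ => Real.log (Tn rshift (F₀ K) n).card / ((n : ℝ) + 1))
      = fun _ : ℕ => Real.log (Fintype.card K) := by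
    funext n
    rw [hcard n, Real.log_pow]
    have hne : ((n : ℝ) + 1) ≠ 0 := by positivity
    push_cast
    field_simp
  rw [Halg, this, Filter.limsup_const]

end Aux

/-- For a nontrivial finite group `K`, the right Bernoulli shift
`β_K` on `⊕_{n ∈ ℕ} K` has algebraic entropy `h_alg(β_K) = log |K|`. -/
theorem statement_13 {K : Type*} [Group K] [Fintype K] [Nontrivial K] :
    halg (rshift (K := K)) = ENNReal.ofReal (Real.log (Fintype.card K)) := by
  apply le_antisymm
  · exact iSup_le fun F => iSup_le fun hF => ENNReal.ofReal_le_ofReal (Halg_le F hF)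
  · exact le_iSup_of_le (F₀ K) (le_iSup_of_le F₀_nonempty (le_of_eq (by rw [Halg_F₀])))
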